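/- arXiv:2407.01800 — 4 statements merged into one kernel-verified Lean document; each statement's English description precedes it below -/
import Mathlib

section
/- Let n ≥ 1, let φ : ℝ → ℝ be differentiable, and let φ also denote its coordinatewise application to vectors in ℝⁿ. Let h ∈ ℝⁿ be such that φ(h) ≠ 0. For any two distinct indices i ≠ j, the partial derivative of the map h ↦ (φ(h)/‖φ(h)‖)_j with respect to the coordinate h_i equals −φ'(h_i) · φ(h_i) · φ(h_j) / ‖φ(h)‖³. In particular, this partial derivative is zero whenever φ'(h_i) = 0. -/
/-- Coordinatewise application of `φ : ℝ → ℝ` to a vector in `ℝⁿ`. -/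
noncomputable def coordwise (n : ℕ) (φ : ℝ → ℝ) (v : EuclideanSpace ℝ (Fin n)) :
    EuclideanSpace ℝ (Fin n) := WithLp.toLp 2 (fun k => φ (v k))

/-- For differentiable `φ : ℝ → ℝ` applied coordinatewise, `h` with
`φ(h) ≠ 0`, and distinct indices `i ≠ j`, the partial derivative of
`h ↦ (φ(h)/‖φ(h)‖)_j` in the coordinate `h_i` equals
`−φ'(h_i)·φ(h_i)·φ(h_j)/‖φ(h)‖³`; in particular it vanishes whenever `φ'(h_i) = 0`. -/
theorem stmt1 (n : ℕ) (hn : 1 ≤ n) (φ : ℝ → ℝ) (hφ : Differentiable ℝ φ)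
    (h : EuclideanSpace ℝ (Fin n)) (hne : coordwise n φ h ≠ 0)
    (i j : Fin n) (hij : i ≠ j) :
    fderiv ℝ (fun v : EuclideanSpace ℝ (Fin n) =>
        (‖coordwise n φ v‖⁻¹ • coordwise n φ v) j) h (EuclideanSpace.single i 1)
      = -(deriv φ (h i)) * φ (h i) * φ (h j) / ‖coordwise n φ h‖ ^ 3
    ∧ (deriv φ (h i) = 0 →
        fderiv ℝ (fun v : EuclideanSpace ℝ (Fin n) =>
          (‖coordwise n φ v‖⁻¹ • coordwise n φ v) j) h (EuclideanSpace.single i 1) = 0) := by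
  classical
  have hnorm : ∀ v : EuclideanSpace ℝ (Fin n),
      ‖coordwise n φ v‖ = Real.sqrt (∑ k, φ (v k) ^ 2) := by
    intro v
    rw [EuclideanSpace.norm_eq]
    congr 1
    refine Finset.sum_congr rfl fun k _ => ?_
    simp [coordwise, Real.norm_eq_abs, sq_abs]
  set q : EuclideanSpace ℝ (Fin n) → ℝ := fun v => ∑ k, φ (v k) ^ 2 with hqdef
  have hrpos : 0 < ‖coordwise n φ h‖ := norm_pos_iff.mpr hne
  have hqpos : 0 < q h := by
    rw [← Real.sqrt_pos, ← hnorm h]; exact hrpos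
  set r : ℝ := ‖coordwise n φ h‖ with hrdef
  have hrq : r = Real.sqrt (q h) := hnorm h
  have hr2 : r ^ 2 = q h := by
    rw [hrq]; exact Real.sq_sqrt hqpos.le
  have hrne : r ≠ 0 := ne_of_gt hrpos
  -- derivative of q
  set Q : EuclideanSpace ℝ (Fin n) →L[ℝ] ℝ :=
    ∑ k, (2 * φ (h k) * deriv φ (h k)) • (EuclideanSpace.proj k : EuclideanSpace ℝ (Fin n) →L[ℝ] ℝ)
    with hQdef
  have hQ : HasFDerivAt q Q h := by
    rw [hqdef, hQdef]
    refine HasFDerivAt.fun_sum fun k _ => ?_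
    have h1 : HasDerivAt (fun t => φ t ^ 2) (2 * φ (h k) * deriv φ (h k)) (h k) := by
      have := ((hφ (h k)).hasDerivAt).pow 2
      simpa [Pi.pow_def, mul_comm, mul_assoc, mul_left_comm] using this
    have h2 := (EuclideanSpace.proj k : EuclideanSpace ℝ (Fin n) →L[ℝ] ℝ).hasFDerivAt (x := h)
    simpa [Function.comp_def] using h1.comp_hasFDerivAt h h2
  -- derivative of v ↦ ‖coordwise v‖
  have hN : HasFDerivAt (fun v : EuclideanSpace ℝ (Fin n) => ‖coordwise n φ v‖)
      ((1 / (2 * r)) • Q) h := by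
    have hs : HasDerivAt Real.sqrt (1 / (2 * Real.sqrt (q h))) (q h) :=
      Real.hasDerivAt_sqrt (ne_of_gt hqpos)
    have := hs.comp_hasFDerivAt h hQ
    have heq : (fun v : EuclideanSpace ℝ (Fin n) => ‖coordwise n φ v‖)
        = fun v => Real.sqrt (q v) := funext hnorm
    rw [heq, ← hrq] at *
    simpa [Function.comp_def, hrq] using this
  -- derivative of inverse of norm
  have hInv : HasFDerivAt (fun v : EuclideanSpace ℝ (Fin n) => ‖coordwise n φ v‖⁻¹)
      (-(r ^ 2)⁻¹ • ((1 / (2 * r)) • Q)) h := by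
    have hinv : HasDerivAt Inv.inv (-(r ^ 2)⁻¹) r := hasDerivAt_inv hrne
    exact hinv.comp_hasFDerivAt h hN
  -- derivative of v ↦ φ (v j)
  have hg2 : HasFDerivAt (fun v : EuclideanSpace ℝ (Fin n) => φ (v j))
      ((deriv φ (h j)) • (EuclideanSpace.proj j : EuclideanSpace ℝ (Fin n) →L[ℝ] ℝ)) h := by
    have h2 := (EuclideanSpace.proj j : EuclideanSpace ℝ (Fin n) →L[ℝ] ℝ).hasFDerivAt (x := h)
    simpa [Function.comp_def] using ((hφ (h j)).hasDerivAt).comp_hasFDerivAt h h2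
  -- product
  have hf : HasFDerivAt (fun v : EuclideanSpace ℝ (Fin n) =>
      (‖coordwise n φ v‖⁻¹ • coordwise n φ v) j)
      (r⁻¹ • ((deriv φ (h j)) • (EuclideanSpace.proj j : EuclideanSpace ℝ (Fin n) →L[ℝ] ℝ))
        + φ (h j) • (-(r ^ 2)⁻¹ • ((1 / (2 * r)) • Q))) h := by
    have := hInv.mul hg2
    have heq : (fun v : EuclideanSpace ℝ (Fin n) => (‖coordwise n φ v‖⁻¹ • coordwise n φ v) j)
        = fun v => ‖coordwise n φ v‖⁻¹ * φ (v j) := by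
      funext v; simp [coordwise]
    rw [heq]
    simpa [Pi.mul_def, coordwise, hrdef] using this
  have key : fderiv ℝ (fun v : EuclideanSpace ℝ (Fin n) =>
        (‖coordwise n φ v‖⁻¹ • coordwise n φ v) j) h (EuclideanSpace.single i 1)
      = -(deriv φ (h i)) * φ (h i) * φ (h j) / r ^ 3 := by
    rw [hf.fderiv]
    have hQval : Q (EuclideanSpace.single i 1) = 2 * φ (h i) * deriv φ (h i) := by
      rw [hQdef]
      simp [ContinuousLinearMap.sum_apply, EuclideanSpace.single_apply]
    have hproj : (EuclideanSpace.proj j : EuclideanSpace ℝ (Fin n) →L[ℝ] ℝ)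
        (EuclideanSpace.single i 1) = 0 := by
      simp [EuclideanSpace.single_apply, hij.symm]
    simp only [ContinuousLinearMap.add_apply, ContinuousLinearMap.smul_apply, hQval, hproj,
      smul_eq_mul, mul_zero]
    field_simp
    ring
  exact ⟨key, fun h0 => by rw [key, h0]; ring⟩
end

section
/- Let f : ℝⁿ \ {0} → ℝ be differentiable and scale-invariant, meaning f(cθ) = f(θ) for every θ ≠ 0 and every real c > 0. Fix θ ≠ 0 and a learning rate η ∈ ℝ, and let θ̃ = θ/‖θ‖ and η̃ = η/‖θ‖². Then a gradient step with the rescaled learning rate on the normalized parameters yields the same function value as a gradient step on the original parameters: f(θ̃ + η̃ ∇f(θ̃)) = f(θ + η ∇f(θ)), provided θ + η∇f(θ) ≠ 0. -/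
open Filter

lemma grad_scale_aux {n : ℕ} (f : EuclideanSpace ℝ (Fin n) → ℝ)
    (hdiff : ∀ θ : EuclideanSpace ℝ (Fin n), θ ≠ 0 → DifferentiableAt ℝ f θ)
    (hsi : ∀ θ : EuclideanSpace ℝ (Fin n), θ ≠ 0 → ∀ c : ℝ, 0 < c → f (c • θ) = f θ)
    (θ : EuclideanSpace ℝ (Fin n)) (hθ : θ ≠ 0) (c : ℝ) (hc : 0 < c) :
    gradient f (c • θ) = c⁻¹ • gradient f θ := by
  have hcθ : c • θ ≠ 0 := smul_ne_zero (ne_of_gt hc) hθ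
  -- fderiv of x ↦ f (c • x) at θ
  have hdg : fderiv ℝ (fun x => f (c • x)) θ
      = (fderiv ℝ f (c • θ)).comp (c • ContinuousLinearMap.id ℝ _) := by
    have h1 : DifferentiableAt ℝ (fun x : EuclideanSpace ℝ (Fin n) => c • x) θ :=
      (c • ContinuousLinearMap.id ℝ (EuclideanSpace ℝ (Fin n))).differentiableAt
    have h2 := fderiv_comp (𝕜 := ℝ) θ (hdiff _ hcθ) h1
    have h3 : fderiv ℝ (fun x : EuclideanSpace ℝ (Fin n) => c • x) θ
        = c • ContinuousLinearMap.id ℝ (EuclideanSpace ℝ (Fin n)) :=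
      (c • ContinuousLinearMap.id ℝ (EuclideanSpace ℝ (Fin n))).fderiv
    calc fderiv ℝ (fun x => f (c • x)) θ = fderiv ℝ (f ∘ fun x => c • x) θ := rfl
      _ = _ := by rw [h2, h3]
  have heq : fderiv ℝ (fun x => f (c • x)) θ = fderiv ℝ f θ := by
    apply Filter.EventuallyEq.fderiv_eq
    have : ∀ᶠ x in nhds θ, x ≠ 0 :=
      eventually_ne_nhds hθ
    filter_upwards [this] with x hx
    exact hsi x hx c hc
  have key : ∀ v, fderiv ℝ f θ v = c * fderiv ℝ f (c • θ) v := by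
    intro v
    rw [← heq, hdg]
    simp
  have hfd : fderiv ℝ f (c • θ) = c⁻¹ • fderiv ℝ f θ := by
    ext v
    rw [ContinuousLinearMap.smul_apply, key v, smul_eq_mul]
    field_simp
  rw [gradient, gradient, hfd, map_smul]

/-- For a differentiable scale-invariant `f`, a raw-gradient step with
effective learning rate `η̃ = η/‖θ‖²` on the normalized parameters `θ̃ = θ/‖θ‖`
yields the same function value as a step of size `η` on the original parameters,
provided `θ + η∇f(θ) ≠ 0`. -/
theorem stmt5 (n : ℕ) (f : EuclideanSpace ℝ (Fin n) → ℝ)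
    (hdiff : ∀ θ : EuclideanSpace ℝ (Fin n), θ ≠ 0 → DifferentiableAt ℝ f θ)
    (hsi : ∀ θ : EuclideanSpace ℝ (Fin n), θ ≠ 0 → ∀ c : ℝ, 0 < c → f (c • θ) = f θ)
    (θ : EuclideanSpace ℝ (Fin n)) (hθ : θ ≠ 0) (η : ℝ)
    (hne : θ + η • gradient f θ ≠ 0) :
    f (‖θ‖⁻¹ • θ + (η / ‖θ‖ ^ 2) • gradient f (‖θ‖⁻¹ • θ))
      = f (θ + η • gradient f θ) := by
  have hnorm : (0:ℝ) < ‖θ‖ := norm_pos_iff.mpr hθ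
  have hinv : (0:ℝ) < ‖θ‖⁻¹ := inv_pos.mpr hnorm
  have hgrad := grad_scale_aux f hdiff hsi θ hθ ‖θ‖⁻¹ hinv
  rw [hgrad, inv_inv]
  have : ‖θ‖⁻¹ • θ + (η / ‖θ‖ ^ 2) • (‖θ‖ • gradient f θ)
      = ‖θ‖⁻¹ • (θ + η • gradient f θ) := by
    rw [smul_add, smul_smul, smul_smul]
    congr 2
    field_simp
  rw [this, hsi _ hne _ hinv]
end

section
/- Let f : ℝⁿ \ {0} → ℝ be differentiable and scale-invariant, meaning f(cθ) = f(θ) for every θ ≠ 0 and every real c > 0. Fix θ ≠ 0 with ∇f(θ) ≠ 0, a learning rate η ∈ ℝ, and let θ̃ = θ/‖θ‖ and η̃ = η/‖θ‖. Then a normalized-gradient step with the rescaled learning rate on the normalized parameters yields the same function value as a normalized-gradient step on the original parameters: f(θ̃ + η̃ · ∇f(θ̃)/‖∇f(θ̃)‖) = f(θ + η · ∇f(θ)/‖∇f(θ)‖), provided θ + η∇f(θ)/‖∇f(θ)‖ ≠ 0. -/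
/-!
Scale invariance makes the gradient homogeneous of degree `-1`, so `∇f(θ/‖θ‖) = ‖θ‖ ∇f(θ)`
has the same direction as `∇f(θ)`. Hence the step on the normalized parameters is exactly
`(θ + η ∇f(θ)/‖∇f(θ)‖) / ‖θ‖`, which scale invariance maps to the same value of `f`.
-/

open NormedSpace

def ScaleInvariant {E F : Type*} [NormedAddCommGroup E] [NormedSpace ℝ E] (f : E → F) : Prop :=
  ∀ θ : E, θ ≠ 0 → ∀ c : ℝ, 0 < c → f (c • θ) = f θ

section

variable {E : Type*} [NormedAddCommGroup E]

theorem ScaleInvariant.fderiv_smul [NormedSpace ℝ E] {F : Type*} [NormedAddCommGroup F]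
    [NormedSpace ℝ F] {f : E → F} (hf : ScaleInvariant f) {θ : E} (hθ : θ ≠ 0) {c : ℝ}
    (hc : 0 < c) : fderiv ℝ f (c • θ) = c⁻¹ • fderiv ℝ f θ := by
  have hcomp : (fun x => f (c • x)) =ᶠ[nhds θ] f := by
    filter_upwards [isOpen_compl_singleton.mem_nhds hθ] with x hx
    exact hf x hx c hc
  rw [← hcomp.fderiv_eq, fderiv_comp_smul, smul_smul, inv_mul_cancel₀ hc.ne', one_smul]

theorem ScaleInvariant.gradient_smul [InnerProductSpace ℝ E] [CompleteSpace E] {f : E → ℝ}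
    (hf : ScaleInvariant f) {θ : E} (hθ : θ ≠ 0) {c : ℝ} (hc : 0 < c) :
    gradient f (c • θ) = c⁻¹ • gradient f θ := by
  rw [gradient, hf.fderiv_smul hθ hc, map_smul, gradient]

end

theorem stmt6_general (n : ℕ) (f : EuclideanSpace ℝ (Fin n) → ℝ)
    (hsi : ∀ θ : EuclideanSpace ℝ (Fin n), θ ≠ 0 → ∀ c : ℝ, 0 < c → f (c • θ) = f θ)
    (θ : EuclideanSpace ℝ (Fin n)) (hθ : θ ≠ 0) (η : ℝ)
    (hne : θ + η • (‖gradient f θ‖⁻¹ • gradient f θ) ≠ 0) :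
    f (‖θ‖⁻¹ • θ + (η / ‖θ‖) • (‖gradient f (‖θ‖⁻¹ • θ)‖⁻¹ • gradient f (‖θ‖⁻¹ • θ)))
      = f (θ + η • (‖gradient f θ‖⁻¹ • gradient f θ)) := by
  change f (‖θ‖⁻¹ • θ + (η / ‖θ‖) • normalize (gradient f (‖θ‖⁻¹ • θ)))
    = f (θ + η • normalize (gradient f θ))
  change θ + η • normalize (gradient f θ) ≠ 0 at hne
  have hr : 0 < ‖θ‖⁻¹ := inv_pos.2 (norm_pos_iff.2 hθ)
  have hdir : normalize (gradient f (‖θ‖⁻¹ • θ)) = normalize (gradient f θ) := by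
    rw [ScaleInvariant.gradient_smul hsi hθ hr, normalize_smul_of_pos (inv_pos.2 hr)]
  rw [hdir, ← hsi _ hne _ hr, smul_add, smul_smul, div_eq_inv_mul]

/-- For a differentiable scale-invariant `f` with `∇f(θ) ≠ 0`, a
normalized-gradient step with effective learning rate `η̃ = η/‖θ‖` on the normalized
parameters `θ̃ = θ/‖θ‖` yields the same function value as a normalized-gradient step
of size `η` on the original parameters, provided `θ + η∇f(θ)/‖∇f(θ)‖ ≠ 0`. -/
theorem stmt6 (n : ℕ) (f : EuclideanSpace ℝ (Fin n) → ℝ)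
    (hdiff : ∀ θ : EuclideanSpace ℝ (Fin n), θ ≠ 0 → DifferentiableAt ℝ f θ)
    (hsi : ∀ θ : EuclideanSpace ℝ (Fin n), θ ≠ 0 → ∀ c : ℝ, 0 < c → f (c • θ) = f θ)
    (θ : EuclideanSpace ℝ (Fin n)) (hθ : θ ≠ 0) (hg : gradient f θ ≠ 0) (η : ℝ)
    (hne : θ + η • (‖gradient f θ‖⁻¹ • gradient f θ) ≠ 0) :
    f (‖θ‖⁻¹ • θ + (η / ‖θ‖) • (‖gradient f (‖θ‖⁻¹ • θ)‖⁻¹ • gradient f (‖θ‖⁻¹ • θ)))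
      = f (θ + η • (‖gradient f θ‖⁻¹ • gradient f θ)) :=
  stmt6_general n f hsi θ hθ η hne
end

section
/- Let W¹, ..., W^L be real matrices of compatible dimensions, let x ∈ ℝ^{d_0}, and consider the RMS-normalized deep linear network g(θ; x) = f_RMS(W^L ⋯ W¹ x), where f_RMS(v) = v/‖v‖ and θ = (W¹,...,W^L). Fix indices l ≠ k and a scalar c > 0, and suppose W^L⋯W¹x ≠ 0. If θ' is obtained from θ by replacing W^k with cW^k, then the derivative of g with respect to W^l is unchanged: for every matrix direction V, the directional derivative of g in W^l along V at θ' equals the directional derivative of g in W^l along V at θ; i.e., ∇_{W^l} (f_RMS ∘ f)(θ'; x) = ∇_{W^l} (f_RMS ∘ f)(θ; x). -/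
/-- Forward pass of a deep linear network: `net d W x L = W^{L-1} ⋯ W⁰ x`. -/
def net (d : ℕ → ℕ) (W : (l : ℕ) → Fin (d (l + 1)) → Fin (d l) → ℝ)
    (x : Fin (d 0) → ℝ) : (L : ℕ) → Fin (d L) → ℝ
  | 0 => x
  | (L + 1) => fun i => ∑ j, W L i j * net d W x L j

/-- RMS normalization of a vector in `ℝⁿ` (Euclidean norm): `v ↦ v/‖v‖`. -/
noncomputable def rms {n : ℕ} (v : Fin n → ℝ) : Fin n → ℝ :=
  (Real.sqrt (∑ i, v i ^ 2))⁻¹ • v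

lemma net_congr (d : ℕ → ℕ) (W W' : (l : ℕ) → Fin (d (l + 1)) → Fin (d l) → ℝ)
    (x : Fin (d 0) → ℝ) (L : ℕ) (h : ∀ m < L, W m = W' m) :
    net d W x L = net d W' x L := by
  induction L with
  | zero => rfl
  | succ L ih =>
    have h1 : net d W x L = net d W' x L := ih fun m hm => h m (Nat.lt_succ_of_lt hm)
    funext i
    simp only [net, h1, h L (Nat.lt_succ_self L)]

lemma net_scale (d : ℕ → ℕ) (W : (l : ℕ) → Fin (d (l + 1)) → Fin (d l) → ℝ)
    (x : Fin (d 0) → ℝ) (k : ℕ) (c : ℝ) (L : ℕ) (hk : k < L) :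
    net d (Function.update W k (c • W k)) x L = c • net d W x L := by
  induction L with
  | zero => omega
  | succ L ih =>
    rcases Nat.lt_or_ge k L with h | h
    · have hkL : k ≠ L := Nat.ne_of_lt h
      funext i
      simp only [net, ih h, Function.update_of_ne (Ne.symm hkL), Pi.smul_apply, smul_eq_mul]
      rw [Finset.mul_sum]; congr 1; funext j; ring
    · have hkL : k = L := by omega
      subst hkL
      have h1 : net d (Function.update W k (c • W k)) x k = net d W x k :=
        net_congr _ _ _ _ _ fun m hm => Function.update_of_ne (Nat.ne_of_lt hm) _ _
      funext i
      simp only [net, h1, Function.update_self, Pi.smul_apply, smul_eq_mul]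
      rw [Finset.mul_sum]
      congr 1; funext j; ring

lemma rms_smul {n : ℕ} (c : ℝ) (hc : 0 < c) (v : Fin n → ℝ) : rms (c • v) = rms v := by
  unfold rms
  have : (∑ i, (c • v) i ^ 2) = c ^ 2 * ∑ i, v i ^ 2 := by
    rw [Finset.mul_sum]; congr 1; funext i; simp [mul_pow]
  rw [this, Real.sqrt_mul (by positivity), Real.sqrt_sq hc.le, mul_inv, smul_smul]
  congr 1
  field_simp

/-- In the RMS-normalized deep linear network
`g(θ; x) = f_RMS(W^L ⋯ W¹ x)`, if `θ'` is obtained from `θ` by replacing `W^k` with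
`c·W^k` (`k ≠ l`, `c > 0`) and `W^L ⋯ W¹ x ≠ 0`, then for every matrix direction `V`
the directional derivative of `g` with respect to `W^l` along `V` is unchanged. -/
theorem stmt10 (d : ℕ → ℕ) (L : ℕ) (W : (l : ℕ) → Fin (d (l + 1)) → Fin (d l) → ℝ)
    (x : Fin (d 0) → ℝ) (l k : ℕ) (hl : l < L) (hk : k < L) (hlk : l ≠ k)
    (c : ℝ) (hc : 0 < c) (hne : net d W x L ≠ 0) :
    ∀ V : Fin (d (l + 1)) → Fin (d l) → ℝ,
      fderiv ℝ (fun M : Fin (d (l + 1)) → Fin (d l) → ℝ =>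
          rms (net d (Function.update (Function.update W k (c • W k)) l M) x L)) (W l) V
        = fderiv ℝ (fun M : Fin (d (l + 1)) → Fin (d l) → ℝ =>
            rms (net d (Function.update W l M) x L)) (W l) V := by
  intro V
  have hfun : (fun M : Fin (d (l + 1)) → Fin (d l) → ℝ =>
      rms (net d (Function.update (Function.update W k (c • W k)) l M) x L))
      = (fun M : Fin (d (l + 1)) → Fin (d l) → ℝ =>
        rms (net d (Function.update W l M) x L)) := by
    funext M
    have h1 : Function.update (Function.update W k (c • W k)) l M
        = Function.update (Function.update W l M) k (c • (Function.update W l M) k) := by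
      rw [Function.update_comm hlk.symm, Function.update_of_ne hlk.symm]
    rw [h1, net_scale d _ x k c L hk, rms_smul c hc]
  rw [hfun]
end
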